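/- arXiv:2308.02001 — 2 statements merged into one kernel-verified Lean document; each statement's English description precedes it below -/
import Mathlib

section
/- For $A\in\mathbb{R}^{m\times d}$, $B\in\mathbb{R}^{n\times d}$, $K\in\mathbb{N}$, and real coefficients $c_0,\dots,c_K$, the rank of $\sum_{k=0}^{K}c_k(AB^T)^{(k)}$ equals $\min\{m,\,n,\,\sum_{k=0}^{K}\mathbb{1}[c_k\ne0]\binom{k+d-1}{k}\}$ for generic $(A,B)$. -/
/-!
Expanding `(a ⬝ᵥ b)ᵏ` by the multinomial theorem factors the Hadamard polynomial of `A Bᵀ` as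
`X D Yᵀ`, where `X`, `Y` list the monomials `a^α`, `b^α` of the rows of `A`, `B` over the set `S`
of exponents with `|α| ≤ K` and `c_{|α|} ≠ 0`, and `D` is the invertible diagonal of the weights
`c_{|α|} · multinomial(α)`. This bounds the rank by `min m n #S`, and
`#S = ∑ₖ [cₖ ≠ 0] C(k+d-1, k)`.

Conversely the monomial vectors `(a^α)_{α ∈ S}` span `𝕜^S`, because a polynomial vanishing on an
infinite field is zero. So for `r ≤ #S` we can pick `r` points making `X D` of full row rank, and
then `r` points `b` whose images `X D (b^α)_α` are independent, which makes the square `X D Yᵀ`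
invertible. Hence the leading `r × r` minor of the generic matrix is a nonzero polynomial in the
entries of `A` and `B`, and off its zero set the rank is at least `r`.
-/

open Finset Matrix Submodule

section Monomials

variable {R : Type*} [CommSemiring R] {d : ℕ}

def hadamardPoly {ι κ : Type*} (c : ℕ → R) (K : ℕ) (M : Matrix ι κ R) : Matrix ι κ R :=
  of fun i j => ∑ k ∈ range (K + 1), c k * M i j ^ k

open Classical in
noncomputable def activeExponents (c : ℕ → R) (d K : ℕ) : Finset (Fin d → ℕ) :=
  ((range (K + 1)).filter fun k => c k ≠ 0).biUnion fun k => piAntidiag univ k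

def monomialVector (S : Finset (Fin d → ℕ)) (a : Fin d → R) : S → R :=
  fun α => ∏ l, a l ^ α.1 l

def monomialMatrix {ι : Type*} (S : Finset (Fin d → ℕ)) (A : Matrix ι (Fin d) R) :
    Matrix ι S R :=
  of fun i => monomialVector S (A i)

def monomialWeight (c : ℕ → R) (α : Fin d → ℕ) : R :=
  c (∑ l, α l) * Nat.multinomial univ α

theorem card_piAntidiag_univ_fin (d k : ℕ) :
    #(piAntidiag (univ : Finset (Fin d)) k) = (k + d - 1).choose k := by
  rw [← map_sym_eq_piAntidiag, card_map, sym_univ, card_univ, Sym.card_sym_eq_choose,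
    Fintype.card_fin, Nat.add_comm]

theorem mem_activeExponents {c : ℕ → R} {K : ℕ} {α : Fin d → ℕ} :
    α ∈ activeExponents c d K ↔ ∑ l, α l ≤ K ∧ c (∑ l, α l) ≠ 0 := by
  simp [activeExponents, mem_piAntidiag]

theorem pairwiseDisjoint_piAntidiag {ι μ : Type*} [DecidableEq ι] [AddCommMonoid μ]
    [HasAntidiagonal μ] [DecidableEq μ] (s : Finset ι) (t : Set μ) :
    t.PairwiseDisjoint (piAntidiag s) :=
  fun _ _ _ _ hne => disjoint_left.mpr fun _ hx hy =>
    hne <| (mem_piAntidiag.mp hx).1.symm.trans (mem_piAntidiag.mp hy).1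

theorem card_activeExponents (c : ℕ → R) (d K : ℕ) [DecidablePred fun k => c k ≠ 0] :
    #(activeExponents c d K) =
      ∑ k ∈ range (K + 1), if c k ≠ 0 then (k + d - 1).choose k else 0 := by
  rw [activeExponents, card_biUnion (pairwiseDisjoint_piAntidiag _ _), sum_filter]
  simp_rw [card_piAntidiag_univ_fin]

theorem sum_mul_dotProduct_pow_eq (c : ℕ → R) (K : ℕ) (a b : Fin d → R) :
    ∑ k ∈ range (K + 1), c k * (a ⬝ᵥ b) ^ k =
      ∑ α : activeExponents c d K, monomialVector _ a α * monomialWeight c α.1 *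
        monomialVector _ b α := by
  classical
  have hterm : ∀ k, ∀ α ∈ piAntidiag univ k,
      c k * (Nat.multinomial univ α * ∏ l, (a l * b l) ^ α l) =
        (∏ l, a l ^ α l) * monomialWeight c α * ∏ l, b l ^ α l := by
    intro k α hα
    rw [monomialWeight, (mem_piAntidiag.mp hα).1]
    simp only [mul_pow, prod_mul_distrib]
    ring
  simp only [monomialVector]
  rw [sum_coe_sort (activeExponents c d K)
    (fun α => (∏ l, a l ^ α l) * monomialWeight c α * ∏ l, b l ^ α l), activeExponents,
    sum_biUnion (pairwiseDisjoint_piAntidiag _ _),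
    ← sum_filter_of_ne fun k _ h => left_ne_zero_of_mul h]
  refine sum_congr rfl fun k _ => ?_
  rw [dotProduct, sum_pow_eq_sum_piAntidiag, mul_sum]
  exact sum_congr rfl (hterm k)

theorem hadamardPoly_mul_transpose {ι κ : Type*} (c : ℕ → R) (K : ℕ)
    (A : Matrix ι (Fin d) R) (B : Matrix κ (Fin d) R) :
    hadamardPoly c K (A * Bᵀ) =
      monomialMatrix (activeExponents c d K) A *
        diagonal (fun α : activeExponents c d K => monomialWeight c α.1) *
        (monomialMatrix (activeExponents c d K) B)ᵀ := by
  ext i j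
  rw [mul_apply]
  simp_rw [mul_diagonal, transpose_apply, monomialMatrix, of_apply]
  exact sum_mul_dotProduct_pow_eq c K (A i) (B j)

theorem rank_hadamardPoly_mul_transpose_le [StrongRankCondition R] {m n : ℕ} (c : ℕ → R)
    (K : ℕ) (A : Matrix (Fin m) (Fin d) R) (B : Matrix (Fin n) (Fin d) R) :
    (hadamardPoly c K (A * Bᵀ)).rank ≤ min m (min n #(activeExponents c d K)) := by
  refine le_min (rank_le_height _) (le_min (rank_le_width _) ?_)
  rw [hadamardPoly_mul_transpose, Matrix.mul_assoc]
  exact (rank_mul_le_left _ _).trans <| (rank_le_card_width _).trans_eq (Fintype.card_coe _)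

end Monomials

theorem exists_linearIndependent_comp_of_span_eq_top {K V ι : Type*} [Field K] [AddCommGroup V]
    [Module K V] [FiniteDimensional K V] {v : ι → V} (hv : span K (Set.range v) = ⊤) {r : ℕ}
    (hr : r ≤ Module.finrank K V) : ∃ g : Fin r → ι, LinearIndependent K (v ∘ g) := by
  obtain ⟨f, hfv, -, hf⟩ := exists_fun_fin_finrank_span_eq K (Set.range v)
  choose g hg using hfv
  have hr' : r ≤ Module.finrank K (span K (Set.range v)) := by rwa [hv, finrank_top]
  refine ⟨g ∘ Fin.castLE hr', ?_⟩
  rw [← Function.comp_assoc, show v ∘ g = f from funext hg]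
  exact hf.comp _ (Fin.castLE_injective hr')

section Field

variable {𝕜 : Type*} [Field 𝕜] {d : ℕ}

theorem span_range_monomialVector [Infinite 𝕜] (S : Finset (Fin d → ℕ)) :
    span 𝕜 (Set.range (monomialVector (R := 𝕜) S)) = ⊤ := by
  by_contra hne
  obtain ⟨f, hf0, hf⟩ :=
    exists_dual_map_eq_bot_of_lt_top (lt_top_iff_ne_top.mpr hne) inferInstance
  set t : S → 𝕜 := fun α => f fun β => if α = β then 1 else 0
  have hf_apply : ∀ x, f x = ∑ α, x α * t α := f.pi_apply_eq_sum_univ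
  have hvanish : ∀ a, ∑ α, monomialVector S a α * t α = 0 := fun a => by
    have := Submodule.mem_map_of_mem (f := f)
      (subset_span (Set.mem_range_self (f := monomialVector S) a))
    rwa [hf, mem_bot, hf_apply] at this
  let q : MvPolynomial (Fin d) 𝕜 :=
    ∑ α : S, MvPolynomial.monomial (Finsupp.equivFunOnFinite.symm α.1) (t α)
  have hq : q = 0 := MvPolynomial.funext fun a => by
    simpa [q, MvPolynomial.eval_monomial, Finsupp.prod_fintype, monomialVector, mul_comm]
      using hvanish a
  have ht : t = 0 := funext fun α => by
    have := congrArg (MvPolynomial.coeff (Finsupp.equivFunOnFinite.symm α.1)) hq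
    simpa [q, MvPolynomial.coeff_sum, MvPolynomial.coeff_monomial] using this
  exact hf0 (LinearMap.ext fun x => by simp [hf_apply, ht])

theorem monomialWeight_ne_zero [CharZero 𝕜] {c : ℕ → 𝕜} {K : ℕ} (α : activeExponents c d K) :
    monomialWeight c α.1 ≠ 0 :=
  mul_ne_zero (mem_activeExponents.mp α.2).2 (Nat.cast_ne_zero.mpr (Nat.multinomial_pos _ _).ne')

theorem exists_isUnit_hadamardPoly_mul_transpose [CharZero 𝕜] (c : ℕ → 𝕜) (K : ℕ) {r : ℕ}
    (hr : r ≤ #(activeExponents c d K)) :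
    ∃ A B : Matrix (Fin r) (Fin d) 𝕜, IsUnit (hadamardPoly c K (A * Bᵀ)) := by
  set S := activeExponents c d K
  have hspan := span_range_monomialVector (𝕜 := 𝕜) S
  obtain ⟨A, hA⟩ := exists_linearIndependent_comp_of_span_eq_top (r := r) hspan
    (by rwa [Module.finrank_fintype_fun_eq_card, Fintype.card_coe])
  set N := monomialMatrix S (of A) * diagonal fun α : S => monomialWeight c α.1
  have hN : N.rank = r := by
    rw [rank_mul_eq_left_of_isUnit_det,
      LinearIndependent.rank_matrix (M := monomialMatrix S (of A)) hA, Fintype.card_fin]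
    simpa [isUnit_iff_ne_zero, prod_ne_zero_iff] using
      fun α hα => monomialWeight_ne_zero ⟨α, hα⟩
  have hN_range : LinearMap.range N.mulVecLin = ⊤ :=
    eq_top_of_finrank_eq (by rw [← rank, hN, Module.finrank_fin_fun])
  have hspan' : span 𝕜 (Set.range (N.mulVecLin ∘ monomialVector S)) = ⊤ := by
    rw [Set.range_comp, span_image, hspan, Submodule.map_top, hN_range]
  obtain ⟨B, hB⟩ := exists_linearIndependent_comp_of_span_eq_top (r := r) hspan'
    (Module.finrank_fin_fun 𝕜).ge
  refine ⟨of A, of B, ?_⟩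
  rw [hadamardPoly_mul_transpose, ← linearIndependent_cols_iff_isUnit]
  exact hB

end Field

theorem le_rank_of_det_submatrix_ne_zero {𝕜 m n : Type*} [Field 𝕜] [Fintype n] {r : ℕ}
    (M : Matrix m n 𝕜) (f : Fin r → m) (g : Fin r → n) (h : (M.submatrix f g).det ≠ 0) :
    r ≤ M.rank :=
  calc r = (M.submatrix f g).rank := by rw [rank_of_det_ne_zero h, Fintype.card_fin]
    _ ≤ M.rank := rank_submatrix_le _ _ _

theorem submatrix_hadamardPoly_mul_transpose {R ι ι' κ κ' : Type*} [CommSemiring R] {d : ℕ}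
    (c : ℕ → R) (K : ℕ) (A : Matrix ι (Fin d) R) (B : Matrix κ (Fin d) R) (f : ι' → ι)
    (g : κ' → κ) :
    (hadamardPoly c K (A * Bᵀ)).submatrix f g =
      hadamardPoly c K (A.submatrix f id * (B.submatrix g id)ᵀ) :=
  rfl

theorem exists_det_submatrix_castLE_hadamardPoly_ne_zero {𝕜 : Type*} [Field 𝕜] [CharZero 𝕜]
    {m n d r : ℕ} (c : ℕ → 𝕜) (K : ℕ) (hrm : r ≤ m) (hrn : r ≤ n)
    (hr : r ≤ #(activeExponents c d K)) :
    ∃ (A : Matrix (Fin m) (Fin d) 𝕜) (B : Matrix (Fin n) (Fin d) 𝕜),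
      ((hadamardPoly c K (A * Bᵀ)).submatrix (Fin.castLE hrm) (Fin.castLE hrn)).det ≠ 0 := by
  obtain ⟨A₀, B₀, hunit⟩ := exists_isUnit_hadamardPoly_mul_transpose c K hr
  let A : Matrix (Fin m) (Fin d) 𝕜 := Function.extend (Fin.castLE hrm) A₀ 0
  let B : Matrix (Fin n) (Fin d) 𝕜 := Function.extend (Fin.castLE hrn) B₀ 0
  refine ⟨A, B, ?_⟩
  rw [submatrix_hadamardPoly_mul_transpose]
  convert ((isUnit_iff_isUnit_det _).mp hunit).ne_zero
  · exact funext ((Fin.castLE_injective hrm).extend_apply A₀ 0)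
  · exact funext ((Fin.castLE_injective hrn).extend_apply B₀ 0)

section Generic

variable {R : Type*} [CommRing R]

noncomputable def genericHadamardPoly (c : ℕ → R) (K m n d : ℕ) :
    Matrix (Fin m) (Fin n) (MvPolynomial ((Fin m × Fin d) ⊕ (Fin n × Fin d)) R) :=
  hadamardPoly (MvPolynomial.C ∘ c) K
    (of fun i j => ∑ l, MvPolynomial.X (Sum.inl (i, l)) * MvPolynomial.X (Sum.inr (j, l)))

variable {m n d : ℕ}

theorem map_eval_genericHadamardPoly (c : ℕ → R) (K : ℕ)
    (x : (Fin m × Fin d) ⊕ (Fin n × Fin d) → R) :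
    (genericHadamardPoly c K m n d).map (MvPolynomial.eval x) =
      hadamardPoly c K (of fun i j => ∑ l, x (Sum.inl (i, l)) * x (Sum.inr (j, l))) := by
  ext i j
  simp [genericHadamardPoly, hadamardPoly]

theorem eval_det_submatrix_genericHadamardPoly {r : ℕ} (c : ℕ → R) (K : ℕ)
    (f : Fin r → Fin m) (g : Fin r → Fin n) (A : Matrix (Fin m) (Fin d) R)
    (B : Matrix (Fin n) (Fin d) R) :
    MvPolynomial.eval (Sum.elim (fun q => A q.1 q.2) (fun q => B q.1 q.2))
        ((genericHadamardPoly c K m n d).submatrix f g).det =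
      ((hadamardPoly c K (A * Bᵀ)).submatrix f g).det := by
  rw [RingHom.map_det, RingHom.mapMatrix_apply, ← submatrix_map, map_eval_genericHadamardPoly]
  rfl

end Generic

/-- Generic rank of a polynomial applied entrywise to a matrix product:
the rank of `∑_{k=0}^{K} c_k (A Bᵀ)^(k)` equals
`min {m, n, ∑_{k=0}^{K} 1[c_k ≠ 0] C(k+d-1, k)}` for all `(A, B)` outside
the zero set of some non-identically-zero polynomial. -/
theorem stmt8 (m n d K : ℕ) (c : ℕ → ℝ) :
    ∃ p : MvPolynomial ((Fin m × Fin d) ⊕ (Fin n × Fin d)) ℝ, p ≠ 0 ∧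
      ∀ (A : Matrix (Fin m) (Fin d) ℝ) (B : Matrix (Fin n) (Fin d) ℝ),
        MvPolynomial.eval
            (Sum.elim (fun q => A q.1 q.2) (fun q => B q.1 q.2)) p ≠ 0 →
          (Matrix.of fun i j =>
              ∑ k ∈ Finset.range (K + 1), c k * ((A * B.transpose) i j) ^ k).rank =
            min m (min n (∑ k ∈ Finset.range (K + 1),
              if c k ≠ 0 then (k + d - 1).choose k else 0)) := by
  show ∃ p, p ≠ 0 ∧ ∀ A B, _ → (hadamardPoly c K (A * Bᵀ)).rank = _
  rw [← card_activeExponents]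
  set r := min m (min n #(activeExponents c d K))
  have hrm : r ≤ m := min_le_left _ _
  have hrn : r ≤ n := (min_le_right _ _).trans (min_le_left _ _)
  have hrS : r ≤ #(activeExponents c d K) := (min_le_right _ _).trans (min_le_right _ _)
  refine ⟨((genericHadamardPoly c K m n d).submatrix (Fin.castLE hrm) (Fin.castLE hrn)).det,
    fun hp => ?_, fun A B hAB => ?_⟩
  · obtain ⟨A, B, hAB⟩ := exists_det_submatrix_castLE_hadamardPoly_ne_zero c K hrm hrn hrS
    rw [← eval_det_submatrix_genericHadamardPoly, hp, map_zero] at hAB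
    exact hAB rfl
  · rw [eval_det_submatrix_genericHadamardPoly] at hAB
    exact (rank_hadamardPoly_mul_transpose_le c K A B).antisymm
      (le_rank_of_det_submatrix_ne_zero _ _ _ hAB)
end

section
/- Let $\phi:\mathbb{R}\to\mathbb{R}$ be real analytic and not a polynomial. Then for $A\in\mathbb{R}^{m\times d}$, $B\in\mathbb{R}^{n\times d}$, the rank of the Khatri-Rao product $B^T\odot\phi(AB^T)$ equals $\min\{md,n\}$ for all $(A,B)$ outside the zero set of a non-identically-zero real analytic function. -/
/-!
Take for `f` the sum of the squares of all `k × k` minors, `k = min (m d) n`: it is analytic,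
and wherever it is nonzero some `k × k` minor is invertible, so the rank is `k`.

It remains to find one point where some `k × k` minor is nonzero. If every row of `A` is
`s_i e_0`, the entries become `B_{j r} φ(s_i B_{j 0})`, so it suffices that the functions
`v ↦ v_r φ(s_i v_0)` on `ℝ^d` are linearly independent: then some `k` of them, evaluated at
suitable points `v` (the rows of `B`), form an invertible matrix. Setting `v = x e_0` and
`v = x e_0 + e_r` reduces this to the independence of `x ↦ φ(s_i x)` and of `x ↦ x φ(s_i x)`.
Since `φ` is not a polynomial, `φ^{(q)}(0) ≠ 0` for infinitely many `q`; differentiating a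
relation `∑ c_i φ(s_i x) = 0` `q` times at `0` gives `∑ c_i s_i^q = 0` for those `q`, and for
generic `s` the resulting generalized Vandermonde matrix is invertible.
-/

open Set Function Polynomial
open scoped ContDiff Matrix

theorem AnalyticOnNhd.infinite_setOf_iteratedDeriv_ne_zero {φ : ℝ → ℝ}
    (hφ : AnalyticOnNhd ℝ φ univ) (hnp : ¬ ∃ P : ℝ[X], ∀ x, φ x = P.eval x) :
    {q | iteratedDeriv q φ 0 ≠ 0}.Infinite := by
  intro hfin
  obtain ⟨N, hN⟩ := hfin.bddAbove
  have hvanish : ∀ q, N < q → iteratedDeriv q φ 0 = 0 := fun q hq => by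
    by_contra h
    exact (hN h).not_gt hq
  set P : ℝ[X] := ∑ i ∈ Finset.range (N + 1), C (iteratedDeriv i φ 0 / i.factorial) * X ^ i
  have hP : (fun x => P.eval x) =
      fun x => ∑ i ∈ Finset.range (N + 1), iteratedDeriv i φ 0 / i.factorial * x ^ i := by
    ext x
    simp [P, eval_finsetSum]
  have hPder : ∀ q, iteratedDeriv q (fun x => P.eval x) 0 = iteratedDeriv q φ 0 := by
    intro q
    rw [hP, iteratedDeriv_fun_sum fun i _ => by fun_prop]
    simp only [iteratedDeriv_const_mul_field, iteratedDeriv_fun_pow_zero, Nat.cast_ite,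
      Nat.cast_zero, mul_ite, mul_zero]
    rw [Finset.sum_ite_eq]
    split_ifs with hq
    · field_simp
    · rw [hvanish q (by simpa using hq)]
  have hev : ∀ᶠ x in nhds 0, φ x - P.eval x = 0 := by
    rw [← analyticOrderAt_eq_top, ENat.eq_top_iff_forall_ge]
    intro n
    rw [natCast_le_analyticOrderAt_iff_iteratedDeriv_eq_zero
      ((hφ 0 trivial).fun_sub (AnalyticOnNhd.eval_polynomial P 0 trivial))]
    intro i _
    rw [iteratedDeriv_fun_sub hφ.contDiff.contDiffAt
      (AnalyticOnNhd.eval_polynomial P).contDiff.contDiffAt, hPder, sub_self]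
  have := hφ.eq_of_eventuallyEq (AnalyticOnNhd.eval_polynomial P)
    (hev.mono fun x hx => sub_eq_zero.1 hx)
  exact hnp ⟨P, congrFun this⟩

theorem LinearIndependent.exists_det_ne_zero {K Θ ι : Type*} [Field K] [Fintype ι]
    [DecidableEq ι] {F : ι → Θ → K} (hF : LinearIndependent K F) :
    ∃ θ : ι → Θ, (Matrix.of fun t j => F t (θ j)).det ≠ 0 := by
  set col : Θ → ι → K := fun θ t => F t θ
  have hspan : ⊤ ≤ Submodule.span K (range col) := by
    by_contra hne
    obtain ⟨g, hg0, hg⟩ := Submodule.exists_dual_map_eq_bot_of_lt_top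
      (lt_top_iff_ne_top.2 (by simpa using hne)) inferInstance
    have hcol : ∀ θ, g (col θ) = 0 := fun θ =>
      LinearMap.le_ker_iff_map.2 hg (Submodule.subset_span (mem_range_self θ))
    have hc : ∀ t, g (fun j => if t = j then 1 else 0) = 0 := by
      refine Fintype.linearIndependent_iff.1 hF _ (funext fun θ => ?_)
      simpa [LinearMap.pi_apply_eq_sum_univ g (col θ), col, mul_comm] using hcol θ
    exact hg0 (LinearMap.ext fun x => by simp [LinearMap.pi_apply_eq_sum_univ g x, hc])
  let b := Module.Basis.ofSpan hspan
  let e := (Pi.basisFun K ι).indexEquiv b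
  choose θ hθ using fun j => Module.Basis.ofSpan_subset hspan (mem_range_self (e j))
  refine ⟨θ, (isUnit_iff_ne_zero.1 ((Matrix.isUnit_iff_isUnit_det _).1 ?_))⟩
  rw [← Matrix.linearIndependent_cols_iff_isUnit]
  have hcols : (Matrix.of fun t j => F t (θ j)).col = b ∘ e := funext hθ
  exact hcols ▸ b.linearIndependent.comp e e.injective

theorem linearIndependent_pow_of_injective {K ι : Type*} [Field K] [Infinite K] [Fintype ι]
    {p : ι → ℕ} (hp : Injective p) : LinearIndependent K fun i (x : K) => x ^ p i := by
  classical
  refine Fintype.linearIndependent_iff.2 fun c hc i => ?_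
  set Q : K[X] := ∑ j, C (c j) * X ^ p j
  have hQ : Q = 0 := Polynomial.funext fun x => by
    simpa [Q, eval_finsetSum] using congrFun hc x
  simpa [Q, finsetSum_coeff, coeff_C_mul_X_pow, hp.eq_iff] using congrArg (coeff · (p i)) hQ

theorem iteratedDeriv_sum_mul_comp_mul_zero {ι : Type*} [Fintype ι] {φ : ℝ → ℝ} {q : ℕ}
    (hφ : ContDiff ℝ q φ) (c s : ι → ℝ) :
    iteratedDeriv q (fun x => ∑ i, c i * φ (s i * x)) 0 =
      (∑ i, c i * s i ^ q) * iteratedDeriv q φ 0 := by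
  rw [iteratedDeriv_fun_sum fun i _ => by fun_prop]
  simp only [iteratedDeriv_const_mul_field, iteratedDeriv_comp_const_mul hφ, mul_zero,
    Finset.sum_mul]
  exact Finset.sum_congr rfl fun i _ => by ring

theorem exists_linearIndependent_comp_mul {φ : ℝ → ℝ} (hφ : ContDiff ℝ ∞ φ)
    (hinf : {q | iteratedDeriv q φ 0 ≠ 0}.Infinite) (ι : Type*) [Fintype ι] :
    ∃ s : ι → ℝ, LinearIndependent ℝ fun i x => φ (s i * x) := by
  classical
  let p : ι → ℕ := fun i => hinf.natEmbedding _ (Fintype.equivFin ι i)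
  have hp : Injective p := fun i j h => (Fintype.equivFin ι).injective
    (Fin.val_injective ((hinf.natEmbedding _).injective (Subtype.val_injective h)))
  have hp_ne : ∀ i, iteratedDeriv (p i) φ 0 ≠ 0 := fun i => (hinf.natEmbedding _ _).2
  obtain ⟨s, hs⟩ := (linearIndependent_pow_of_injective (K := ℝ) hp).exists_det_ne_zero
  refine ⟨s, Fintype.linearIndependent_iff.2 fun c hc => ?_⟩
  have hc' : (fun x => ∑ i, c i * φ (s i * x)) = 0 := by simpa [Finset.sum_fn] using hc
  refine congrFun (Matrix.eq_zero_of_mulVec_eq_zero hs (funext fun l => ?_))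
  have := iteratedDeriv_sum_mul_comp_mul_zero
    (hφ.of_le (by exact_mod_cast le_top) : ContDiff ℝ (p l) φ) c s
  rw [hc', iteratedDeriv_const_zero] at this
  simpa [Matrix.mulVec, dotProduct, mul_comm, hp_ne l] using this

theorem LinearIndependent.id_mul_of_continuous {ι : Type*} [Fintype ι] {g : ι → ℝ → ℝ}
    (hg : LinearIndependent ℝ g) (hcont : ∀ i, Continuous (g i)) :
    LinearIndependent ℝ fun i x => x * g i x := by
  refine Fintype.linearIndependent_iff.2 fun c hc => Fintype.linearIndependent_iff.1 hg c ?_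
  have hcont' : Continuous fun x => ∑ i, c i * g i x :=
    continuous_finsetSum _ fun i _ => continuous_const.mul (hcont i)
  have hvanish : ∀ x ≠ 0, ∑ i, c i * g i x = 0 := fun x hx => by
    have := congrFun hc x
    simp only [Finset.sum_apply, Pi.smul_apply, smul_eq_mul, Pi.zero_apply, mul_left_comm _ x,
      ← Finset.mul_sum] at this
    exact (mul_eq_zero.1 this).resolve_left hx
  ext x
  simpa using congrFun (hcont'.ext_on (dense_compl_singleton 0) continuous_const hvanish) x

theorem linearIndependent_apply_mul_comp_apply {K δ ι : Type*} [CommRing K] [Fintype δ]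
    [DecidableEq δ] [Fintype ι] {g : ι → K → K} (r₀ : δ) (hg : LinearIndependent K g)
    (hxg : LinearIndependent K fun i x => x * g i x) :
    LinearIndependent K fun p : δ × ι => fun v : δ → K => v p.1 * g p.2 (v r₀) := by
  refine Fintype.linearIndependent_iff.2 fun c hc => ?_
  have hsum : ∀ v : δ → K, ∑ r, v r * ∑ i, c (r, i) * g i (v r₀) = 0 := fun v => by
    simpa [Fintype.sum_prod_type, Finset.mul_sum, mul_left_comm] using congrFun hc v
  have h₀ : ∀ i, c (r₀, i) = 0 := Fintype.linearIndependent_iff.1 hxg _ <| funext fun x => by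
    have := hsum (Pi.single r₀ x)
    rw [Fintype.sum_eq_single r₀ fun r hr => by simp [hr]] at this
    simpa [Finset.mul_sum, mul_left_comm] using this
  have h₁ : ∀ r ≠ r₀, ∀ i, c (r, i) = 0 := fun r hr => Fintype.linearIndependent_iff.1 hg _ <|
    funext fun x => by
      have := hsum (Pi.single r₀ x + Pi.single r 1)
      rw [Fintype.sum_eq_add r₀ r (Ne.symm hr) fun r' hr' => by simp [hr'.1, hr'.2]] at this
      simpa [hr, h₀] using this
  rintro ⟨r, i⟩
  by_cases hr : r = r₀
  · exact hr ▸ h₀ i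
  · exact h₁ r hr i

def khatriRao {R δ ι κ : Type*} [Mul R] (M : Matrix δ κ R) (N : Matrix ι κ R) :
    Matrix (δ × ι) κ R :=
  Matrix.of fun r j => M r.1 j * N r.2 j

theorem exists_det_submatrix_khatriRao_ne_zero {φ : ℝ → ℝ} (hφ : ContDiff ℝ ∞ φ)
    (hinf : {q | iteratedDeriv q φ 0 ≠ 0}.Infinite) {m n d k : ℕ} (hkmd : k ≤ m * d)
    (hkn : k ≤ n) :
    ∃ (A : Matrix (Fin m) (Fin d) ℝ) (B : Matrix (Fin n) (Fin d) ℝ)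
      (ρ : Fin k → Fin d × Fin m) (γ : Fin k → Fin n),
      ((khatriRao Bᵀ ((A * Bᵀ).map φ)).submatrix ρ γ).det ≠ 0 := by
  rcases Nat.eq_zero_or_pos d with rfl | hd
  · obtain rfl : k = 0 := by simpa using hkmd
    exact ⟨0, 0, finZeroElim, finZeroElim, by simp⟩
  have := NeZero.of_pos hd
  obtain ⟨s, hs⟩ := exists_linearIndependent_comp_mul hφ hinf (Fin m)
  have hG := linearIndependent_apply_mul_comp_apply (0 : Fin d) hs
    (hs.id_mul_of_continuous fun i => hφ.continuous.comp (continuous_const.mul continuous_id))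
  let ρ : Fin k ↪ Fin d × Fin m := (Fin.castLEEmb (by simpa [mul_comm] using hkmd)).trans
    (Fintype.equivFin _).symm.toEmbedding
  let γ : Fin k ↪ Fin n := Fin.castLEEmb hkn
  obtain ⟨v, hv⟩ := (hG.comp ρ ρ.injective).exists_det_ne_zero
  let A : Matrix (Fin m) (Fin d) ℝ := .of fun i => Pi.single 0 (s i)
  let B : Matrix (Fin n) (Fin d) ℝ := .of (extend γ v 0)
  refine ⟨A, B, ρ, γ, ?_⟩
  have hB : ∀ j, B (γ j) = v j := γ.injective.extend_apply v 0
  have hAB : ∀ i j, (A * Bᵀ) i j = s i * B j 0 := fun i j => by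
    simp [A, Matrix.mul_apply, Pi.single_apply]
  have hentries : (khatriRao Bᵀ ((A * Bᵀ).map φ)).submatrix ρ γ =
      .of fun t j => v j (ρ t).1 * φ (s (ρ t).2 * v j 0) := by
    ext t j
    simp [khatriRao, hAB, hB]
  rw [hentries]
  exact hv

def sumSqMinors {R α β : Type*} [CommRing R] [Fintype α] [Fintype β] (k : ℕ)
    (M : Matrix α β R) : R :=
  ∑ ργ : (Fin k → α) × (Fin k → β), (M.submatrix ργ.1 ργ.2).det ^ 2

theorem sumSqMinors_ne_zero_iff {R α β : Type*} [CommRing R] [LinearOrder R]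
    [IsStrictOrderedRing R] [Fintype α] [Fintype β] {k : ℕ} {M : Matrix α β R} :
    sumSqMinors k M ≠ 0 ↔ ∃ (ρ : Fin k → α) (γ : Fin k → β), (M.submatrix ρ γ).det ≠ 0 := by
  rw [sumSqMinors, Ne, Fintype.sum_eq_zero_iff_of_nonneg fun _ => sq_nonneg _]
  simp [funext_iff]

theorem AnalyticAt.matrix_det {𝕜 E ι : Type*} [NontriviallyNormedField 𝕜]
    [NormedAddCommGroup E] [NormedSpace 𝕜 E] [Fintype ι] [DecidableEq ι]
    {M : E → Matrix ι ι 𝕜} {x : E} (hM : ∀ i j, AnalyticAt 𝕜 (fun y => M y i j) x) :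
    AnalyticAt 𝕜 (fun y => (M y).det) x := by
  simp only [Matrix.det_apply, Units.smul_def, zsmul_eq_mul]
  exact Finset.analyticAt_fun_sum _ fun σ _ =>
    analyticAt_const.mul (Finset.analyticAt_fun_prod _ fun i _ => hM _ _)

theorem AnalyticAt.sumSqMinors {E α β : Type*} [NormedAddCommGroup E] [NormedSpace ℝ E]
    [Fintype α] [Fintype β] {M : E → Matrix α β ℝ} {x : E}
    (hM : ∀ a b, AnalyticAt ℝ (fun y => M y a b) x) (k : ℕ) :
    AnalyticAt ℝ (fun y => sumSqMinors k (M y)) x :=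
  Finset.analyticAt_fun_sum _ fun _ _ => (AnalyticAt.matrix_det fun _ _ => hM _ _).pow 2

theorem Matrix.card_le_rank_of_det_submatrix_ne_zero {K α β ι : Type*} [Field K] [Fintype β]
    [Fintype ι] [DecidableEq ι] {M : Matrix α β K} {ρ : ι → α} {γ : ι → β}
    (h : (M.submatrix ρ γ).det ≠ 0) : Fintype.card ι ≤ M.rank := by
  rw [← (M.submatrix ρ γ).rank_of_isUnit ((isUnit_iff_isUnit_det _).2 (isUnit_iff_ne_zero.2 h))]
  exact M.rank_submatrix_le ρ γ

/-- If `φ : ℝ → ℝ` is real analytic and not a polynomial, then the Khatri-Rao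
product `Bᵀ ⊙ φ(A Bᵀ) ∈ ℝ^{md × n}` has rank `min {m d, n}` for all `(A, B)`
outside the zero set of a non-identically-zero real analytic function. -/
theorem stmt12 (m n d : ℕ) (φ : ℝ → ℝ)
    (hφ : AnalyticOnNhd ℝ φ Set.univ)
    (hnp : ¬ ∃ P : Polynomial ℝ, ∀ x, φ x = P.eval x) :
    ∃ f : (((Fin m × Fin d) ⊕ (Fin n × Fin d)) → ℝ) → ℝ,
      AnalyticOnNhd ℝ f Set.univ ∧ (∃ x, f x ≠ 0) ∧
      ∀ (A : Matrix (Fin m) (Fin d) ℝ) (B : Matrix (Fin n) (Fin d) ℝ),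
        f (Sum.elim (fun q => A q.1 q.2) (fun q => B q.1 q.2)) ≠ 0 →
          (Matrix.of fun (r : Fin d × Fin m) (j : Fin n) =>
              B j r.1 * φ ((A * B.transpose) r.2 j)).rank = min (m * d) n := by
  set k := min (m * d) n
  refine ⟨fun y =>
    let A : Matrix (Fin m) (Fin d) ℝ := .of fun i r => y (.inl (i, r))
    let B : Matrix (Fin n) (Fin d) ℝ := .of fun j r => y (.inr (j, r))
    sumSqMinors k (khatriRao Bᵀ ((A * Bᵀ).map φ)), fun y _ => ?_, ?_, fun A B hf => ?_⟩
  · have hproj : ∀ q, AnalyticAt ℝ (fun y : (Fin m × Fin d) ⊕ (Fin n × Fin d) → ℝ => y q) y :=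
      fun q => (ContinuousLinearMap.proj (R := ℝ) (φ := fun _ => ℝ) q).analyticAt y
    refine AnalyticAt.sumSqMinors (fun a b => ?_) k
    simp only [khatriRao, Matrix.of_apply, Matrix.transpose_apply, Matrix.map_apply,
      Matrix.mul_apply]
    exact (hproj _).mul ((hφ _ trivial).comp
      (Finset.analyticAt_fun_sum _ fun l _ => (hproj _).mul (hproj _)))
  · obtain ⟨A, B, ρ, γ, h⟩ := exists_det_submatrix_khatriRao_ne_zero hφ.contDiff
      (hφ.infinite_setOf_iteratedDeriv_ne_zero hnp) (min_le_left (m * d) n) (min_le_right _ _)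
    exact ⟨Sum.elim (fun q => A q.1 q.2) (fun q => B q.1 q.2), sumSqMinors_ne_zero_iff.2 ⟨ρ, γ, h⟩⟩
  · change (khatriRao Bᵀ ((A * Bᵀ).map φ)).rank = k
    obtain ⟨ρ, γ, h⟩ := sumSqMinors_ne_zero_iff.1 hf
    refine le_antisymm (le_min ?_ ?_) ?_
    · exact (Matrix.rank_le_card_height _).trans (by simp [mul_comm])
    · exact (Matrix.rank_le_card_width _).trans (by simp)
    · simpa using Matrix.card_le_rank_of_det_submatrix_ne_zero
        (M := khatriRao Bᵀ ((A * Bᵀ).map φ)) h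
end
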